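/- Let G be a graph on n vertices. Then the binomial edge ideal J(G) in R = k[x_1,...,x_n,y_1,...,y_n] satisfies J(G) = ⋂_{S ∈ C(G)} P_S(G), and this is the (minimal) primary decomposition of J(G); in particular J(G) is a radical ideal. -/

import Mathlib

open MvPolynomial

/-- `x_i` in `R = k[x_1,…,x_n,y_1,…,y_n]`. -/
noncomputable def xv (k : Type) [Field k] (n : ℕ) (i : Fin n) :
    MvPolynomial (Fin n ⊕ Fin n) k := X (Sum.inl i)

/-- `y_i` in `R = k[x_1,…,x_n,y_1,…,y_n]`. -/
noncomputable def yv (k : Type) [Field k] (n : ℕ) (i : Fin n) :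
    MvPolynomial (Fin n ⊕ Fin n) k := X (Sum.inr i)

/-- `δ_{ij} = x_i y_j - x_j y_i`. -/
noncomputable def delta (k : Type) [Field k] (n : ℕ) (i j : Fin n) :
    MvPolynomial (Fin n ⊕ Fin n) k :=
  xv k n i * yv k n j - xv k n j * yv k n i

/-- The binomial edge ideal `J(G) = (δ_{ij} : {i,j} ∈ E(G))`. -/
noncomputable def JG (k : Type) [Field k] (n : ℕ) (G : SimpleGraph (Fin n)) :
    Ideal (MvPolynomial (Fin n ⊕ Fin n) k) :=
  Ideal.span {f | ∃ i j, G.Adj i j ∧ f = delta k n i j}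

/-- The number of connected components of the induced subgraph of `G` on `A`. -/
noncomputable def comps {n : ℕ} (G : SimpleGraph (Fin n)) (A : Set (Fin n)) : ℕ :=
  Nat.card ((G.induce A).ConnectedComponent)

/-- `C(G)`. -/
def cutSets {n : ℕ} (G : SimpleGraph (Fin n)) : Set (Set (Fin n)) :=
  {S | S = ∅ ∨ ∀ w ∈ S, comps G (S \ {w})ᶜ < comps G Sᶜ}

/-- `P_S(G)`. -/
noncomputable def PS (k : Type) [Field k] (n : ℕ) (G : SimpleGraph (Fin n))
    (S : Set (Fin n)) : Ideal (MvPolynomial (Fin n ⊕ Fin n) k) :=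
  Ideal.span ({f | ∃ i ∈ S, f = xv k n i ∨ f = yv k n i} ∪
    {f | ∃ (i j : Fin n) (hi : i ∈ Sᶜ) (hj : j ∈ Sᶜ), i ≠ j ∧
      (G.induce Sᶜ).Reachable ⟨i, hi⟩ ⟨j, hj⟩ ∧ f = delta k n i j})

/-!
`P_S(G)` is the kernel of the monomial map killing `x_i, y_i` for `i ∈ S` and sending
`x_i ↦ t_i u_c`, `y_i ↦ t_i v_c` otherwise, `c` the component of `i` in `G \ S`. Indeed the
standard monomials (divisible by no variable of `S` and by no `x_j y_i` with `i < j` in one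
component) span modulo `P_S(G)`, and their images are distinct monomials. So `P_S(G)` is prime.

`⋂_S P_S(G) ⊆ J(G)` is proved by induction. If the neighbours of every vertex form a clique, the
components of `G` are complete and `P_∅(G) = J(G)`. Otherwise pick `v` with two non-adjacent
neighbours, let `G'` be `G` with the neighbourhood of `v` completed and `G''` be `G` with `v`
isolated. An `f ∈ ⋂_S P_S(G)` lies in `⋂_S P_S(G') ⊆ J(G')`, and, after `x_v, y_v ↦ 0`, in
`⋂_T P_T(G'') ⊆ J(G'')`; hence `f ∈ J(G') ∩ ((x_v, y_v) + J(G)) = J(G)`, the last equality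
because `x_v δ_ab, y_v δ_ab ∈ J(G)` for neighbours `a, b` of `v`.

Removing from `S` a vertex whose return merges no components only shrinks `P_S(G)`, so the cut
sets suffice. For a cut set `S` and `T ≠ S`, `P_T(G) ⊆ P_S(G)` would force `T ⊊ S`; returning a
`w ∈ S \ T` links two components of `G \ S`, and the corresponding `δ_ij` lies in `P_T(G)` but
not in `P_S(G)`. Irredundancy follows by primality.
-/

theorem Finsupp.exists_eq_add_single {σ : Type*} {m : σ →₀ ℕ} {w : σ} (h : m w ≠ 0) :
    ∃ m₀, m = m₀ + .single w 1 :=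
  ⟨m - .single w 1,
    (tsub_add_cancel_of_le (Finsupp.single_le_iff.2 (Nat.one_le_iff_ne_zero.2 h))).symm⟩

theorem MvPolynomial.ker_eq_of_injOn_monomials {A σ τ : Type*} [CommRing A]
    {φ : MvPolynomial σ A →ₐ[A] MvPolynomial τ A}
    {I : Ideal (MvPolynomial σ A)} {s : Set (σ →₀ ℕ)} {e : (σ →₀ ℕ) → τ →₀ ℕ}
    (hI : I ≤ RingHom.ker φ) (hφ : ∀ m ∈ s, φ (monomial m 1) = monomial (e m) 1)
    (he : Set.InjOn e s)
    (hspan : ∀ m, monomial m 1 ∈ I.restrictScalars A ⊔ restrictSupport A s) :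
    RingHom.ker φ = I := by
  classical
  have hφ' : ∀ m ∈ s, ∀ c : A, φ (monomial m c) = monomial (e m) c := fun m hm c => by
    rw [← mul_one c, ← smul_eq_mul, ← smul_monomial, map_smul, hφ m hm, smul_monomial]
  have coeff_φ : ∀ g ∈ restrictSupport A s, ∀ m ∈ s, coeff (e m) (φ g) = coeff m g := by
    intro g hg m hm
    rw [mem_restrictSupport_iff] at hg
    conv_lhs => rw [g.as_sum, map_sum]
    rw [coeff_sum, Finset.sum_eq_single m]
    · rw [hφ' m hm, coeff_monomial, if_pos rfl]
    · intro m' hm' hne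
      rw [hφ' m' (hg hm'), coeff_monomial, if_neg fun h => hne (he (hg hm') hm h)]
    · intro hm'
      rw [notMem_support_iff.1 hm', monomial_zero, map_zero, coeff_zero]
  refine le_antisymm (fun f hf => ?_) hI
  have hf_mem : f ∈ I.restrictScalars A ⊔ restrictSupport A s := by
    have : f ∈ restrictSupport A Set.univ := (mem_restrictSupport_iff A).2 (Set.subset_univ _)
    rw [restrictSupport_eq_span] at this
    exact Submodule.span_le.2 (by rintro _ ⟨m, -, rfl⟩; exact hspan m) this
  obtain ⟨p, hp, g, hg, rfl⟩ := Submodule.mem_sup.1 hf_mem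
  have hφg : φ g = 0 := by
    simpa [RingHom.mem_ker.1 (hI hp)] using RingHom.mem_ker.1 hf
  have hg0 : g = 0 := by
    ext m
    by_cases hm : m ∈ s
    · rw [← coeff_φ g hg m hm, hφg, coeff_zero, coeff_zero]
    · rw [coeff_zero, ← notMem_support_iff]
      exact fun h => hm ((mem_restrictSupport_iff A).1 hg h)
  simpa [hg0] using hp

theorem Ideal.sub_mem_mul_span_of_fixed {A : Type*} [CommRing A] (π : A →+* A) {K : Ideal A}
    (hK : ∀ a, a - π a ∈ K) {s : Set A} (hs : ∀ g ∈ s, π g = g) {d : A}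
    (hd : d ∈ Ideal.span s) : d - π d ∈ K * Ideal.span s := by
  have hπ : Ideal.span s ≤ (Ideal.span s).comap π :=
    Ideal.span_le.2 fun g hg => by simpa [hs g hg] using Ideal.subset_span hg
  induction hd using Submodule.span_induction with
  | mem g hg => simp [hs g hg]
  | zero => simp
  | add a b _ _ ha hb => simpa only [map_add, add_sub_add_comm] using add_mem ha hb
  | smul a b hb ih =>
    rw [smul_eq_mul, map_mul, show a * b - π a * π b = a * (b - π b) + (a - π a) * π b by ring]
    exact add_mem (Ideal.mul_mem_left _ _ ih) (Ideal.mul_mem_mul (hK a) (hπ hb))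

theorem Ideal.IsPrime.exists_le_of_biInf_le {A ι : Type*} [CommRing A] {s : Set ι}
    (hs : s.Finite) {f : ι → Ideal A} {p : Ideal A} (hp : p.IsPrime) (h : ⨅ i ∈ s, f i ≤ p) :
    ∃ i ∈ s, f i ≤ p := by
  simpa using (hp.inf_le' (s := hs.toFinset) (f := f)).1 (by simpa [Finset.inf_eq_iInf] using h)

noncomputable section

namespace BinomialEdgeIdeal

open SimpleGraph
open scoped Classical

variable (k : Type) [CommRing k] {V : Type}

def x (i : V) : MvPolynomial (V ⊕ V) k := X (Sum.inl i)

def y (i : V) : MvPolynomial (V ⊕ V) k := X (Sum.inr i)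

def δ (i j : V) : MvPolynomial (V ⊕ V) k := x k i * y k j - x k j * y k i

def J (G : SimpleGraph V) : Ideal (MvPolynomial (V ⊕ V) k) :=
  Ideal.span {f | ∃ i j, G.Adj i j ∧ f = δ k i j}

def P (G : SimpleGraph V) (S : Set V) : Ideal (MvPolynomial (V ⊕ V) k) :=
  Ideal.span ({f | ∃ i ∈ S, f = x k i ∨ f = y k i} ∪
    {f | ∃ (i j : V) (hi : i ∈ Sᶜ) (hj : j ∈ Sᶜ), i ≠ j ∧
      (G.induce Sᶜ).Reachable ⟨i, hi⟩ ⟨j, hj⟩ ∧ f = δ k i j})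

def Linked (G : SimpleGraph V) (S : Set V) (i j : V) : Prop :=
  ∃ (hi : i ∈ Sᶜ) (hj : j ∈ Sᶜ), (G.induce Sᶜ).Reachable ⟨i, hi⟩ ⟨j, hj⟩

variable {k} {G : SimpleGraph V} {S : Set V}

section Linked

lemma linked_refl {i : V} (hi : i ∉ S) : Linked G S i i := ⟨hi, hi, .refl _⟩

lemma Linked.symm {i j : V} (h : Linked G S i j) : Linked G S j i :=
  let ⟨hi, hj, hr⟩ := h; ⟨hj, hi, hr.symm⟩

lemma Linked.trans {i j l : V} (h : Linked G S i j) (h' : Linked G S j l) : Linked G S i l :=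
  let ⟨hi, _, hr⟩ := h; let ⟨_, hl, hr'⟩ := h'; ⟨hi, hl, hr.trans hr'⟩

lemma Linked.notMem_left {i j : V} (h : Linked G S i j) : i ∉ S := h.1

lemma Linked.notMem_right {i j : V} (h : Linked G S i j) : j ∉ S := h.2.1

lemma Linked.mono {G' : SimpleGraph V} {S' : Set V} (hS : S' ⊆ S)
    (hG : ∀ a b, a ∉ S → b ∉ S → G.Adj a b → G'.Adj a b) {i j : V} (h : Linked G S i j) :
    Linked G' S' i j := by
  obtain ⟨hi, hj, hr⟩ := h
  let f : G.induce Sᶜ →g G'.induce S'ᶜ :=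
    ⟨fun a => ⟨a, fun h => a.2 (hS h)⟩, fun {a b} hab => hG a b a.2 b.2 hab⟩
  exact ⟨_, _, hr.map f⟩

lemma Linked.of_adj {i j : V} (hi : i ∉ S) (hj : j ∉ S) (h : G.Adj i j) : Linked G S i j :=
  ⟨hi, hj, (show (G.induce Sᶜ).Adj ⟨i, hi⟩ ⟨j, hj⟩ from h).reachable⟩

end Linked

section Membership

lemma x_mem_P {i : V} (hi : i ∈ S) : x k i ∈ P k G S :=
  Ideal.subset_span (Or.inl ⟨i, hi, Or.inl rfl⟩)

lemma y_mem_P {i : V} (hi : i ∈ S) : y k i ∈ P k G S :=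
  Ideal.subset_span (Or.inl ⟨i, hi, Or.inr rfl⟩)

lemma δ_mem_P {i j : V} (hne : i ≠ j) (h : Linked G S i j) : δ k i j ∈ P k G S :=
  let ⟨hi, hj, hr⟩ := h; Ideal.subset_span (Or.inr ⟨i, j, hi, hj, hne, hr, rfl⟩)

lemma δ_mem_P_of_left_mem {i j : V} (hi : i ∈ S) : δ k i j ∈ P k G S := by
  rw [δ, mul_comm (x k i)]
  exact sub_mem (Ideal.mul_mem_left _ _ (x_mem_P hi)) (Ideal.mul_mem_left _ _ (y_mem_P hi))

lemma δ_mem_P_of_right_mem {i j : V} (hj : j ∈ S) : δ k i j ∈ P k G S := by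
  rw [δ, mul_comm (x k j)]
  exact sub_mem (Ideal.mul_mem_left _ _ (y_mem_P hj)) (Ideal.mul_mem_left _ _ (x_mem_P hj))

lemma P_le_iff {I : Ideal (MvPolynomial (V ⊕ V) k)} :
    P k G S ≤ I ↔ (∀ i ∈ S, x k i ∈ I ∧ y k i ∈ I) ∧
      ∀ i j, i ≠ j → Linked G S i j → δ k i j ∈ I := by
  simp only [P, Ideal.span_le, Set.union_subset_iff, Set.ofPred_subset]
  constructor
  · rintro ⟨hxy, hδ⟩
    exact ⟨fun i hi => ⟨hxy _ ⟨i, hi, .inl rfl⟩, hxy _ ⟨i, hi, .inr rfl⟩⟩,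
      fun i j hne ⟨hi, hj, hr⟩ => hδ _ ⟨i, j, hi, hj, hne, hr, rfl⟩⟩
  · rintro ⟨hxy, hδ⟩
    refine ⟨?_, ?_⟩
    · rintro _ ⟨i, hi, rfl | rfl⟩
      exacts [(hxy i hi).1, (hxy i hi).2]
    · rintro _ ⟨i, j, hi, hj, hne, hr, rfl⟩
      exact hδ i j hne ⟨hi, hj, hr⟩

lemma δ_mem_J {i j : V} (h : G.Adj i j) : δ k i j ∈ J k G :=
  Ideal.subset_span ⟨i, j, h, rfl⟩

lemma J_le_iff {I : Ideal (MvPolynomial (V ⊕ V) k)} :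
    J k G ≤ I ↔ ∀ i j, G.Adj i j → δ k i j ∈ I := by
  simp only [J, Ideal.span_le, Set.ofPred_subset]
  exact ⟨fun h i j hij => h _ ⟨i, j, hij, rfl⟩, fun h _ ⟨i, j, hij, hf⟩ => hf ▸ h i j hij⟩

lemma J_le_P (G : SimpleGraph V) (S : Set V) : J k G ≤ P k G S := by
  refine J_le_iff.2 fun i j hij => ?_
  by_cases hi : i ∈ S
  · exact δ_mem_P_of_left_mem hi
  by_cases hj : j ∈ S
  · exact δ_mem_P_of_right_mem hj
  exact δ_mem_P hij.ne (.of_adj hi hj hij)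

lemma J_mono {G G' : SimpleGraph V} (h : G ≤ G') : J k G ≤ J k G' :=
  J_le_iff.2 fun _ _ hij => δ_mem_J (h hij)

lemma P_mono {G G' : SimpleGraph V} (h : G ≤ G') (S : Set V) : P k G S ≤ P k G' S :=
  P_le_iff.2 ⟨fun _ hi => ⟨x_mem_P hi, y_mem_P hi⟩,
    fun _ _ hne hij => δ_mem_P hne (hij.mono subset_rfl fun _ _ _ _ hab => h hab)⟩

end Membership

section Parametrization

variable (G S) in
def component (i : V) : Set V := {j | Linked G S i j}

lemma component_eq_of_linked {i j : V} (h : Linked G S i j) :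
    component G S i = component G S j :=
  Set.ext fun _ => ⟨h.symm.trans, h.trans⟩

lemma linked_of_component_eq {i j : V} (hj : j ∉ S) (h : component G S i = component G S j) :
    Linked G S i j :=
  show j ∈ component G S i from h ▸ linked_refl hj

variable (G S) in
/-- The exponents of `t_i u_c` and `t_i v_c`, the images of `x_i` and `y_i` for `c` the component
of `i`, where `t_i`, `u_c`, `v_c` are the variables `inl i`, `inr (inl c)`, `inr (inr c)`. -/
def paramExp : V ⊕ V → (V ⊕ (Set V ⊕ Set V) →₀ ℕ)
  | .inl i => .single (.inl i) 1 + .single (.inr (.inl (component G S i))) 1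
  | .inr i => .single (.inl i) 1 + .single (.inr (.inr (component G S i))) 1

variable (k G S) in
def param : MvPolynomial (V ⊕ V) k →ₐ[k] MvPolynomial (V ⊕ (Set V ⊕ Set V)) k :=
  aeval <| Sum.elim (fun i => if i ∈ S then 0 else monomial (paramExp G S (.inl i)) 1)
    (fun i => if i ∈ S then 0 else monomial (paramExp G S (.inr i)) 1)

lemma param_x (i : V) :
    param k G S (x k i) = if i ∈ S then 0 else monomial (paramExp G S (.inl i)) 1 := by
  simp only [param, x, aeval_X, Sum.elim_inl]

lemma param_y (i : V) :
    param k G S (y k i) = if i ∈ S then 0 else monomial (paramExp G S (.inr i)) 1 := by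
  simp only [param, y, aeval_X, Sum.elim_inr]

lemma param_δ {i j : V} (hi : i ∉ S) (hj : j ∉ S) :
    param k G S (δ k i j) =
      monomial (paramExp G S (.inl i) + paramExp G S (.inr j)) 1 -
        monomial (paramExp G S (.inl j) + paramExp G S (.inr i)) 1 := by
  simp only [δ, map_sub, map_mul, param_x, param_y, if_neg hi, if_neg hj, monomial_mul, mul_one]

lemma P_le_ker_param : P k G S ≤ RingHom.ker (param k G S) := by
  refine P_le_iff.2 ⟨fun i hi => ?_, fun i j _ hij => ?_⟩ <;> simp only [RingHom.mem_ker]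
  · simp [param_x, param_y, hi]
  · rw [param_δ hij.notMem_left hij.notMem_right, sub_eq_zero, paramExp, paramExp, paramExp,
      paramExp, component_eq_of_linked hij]
    ac_rfl

lemma x_notMem_P [Nontrivial k] {i : V} (hi : i ∉ S) : x k i ∉ P k G S := fun h => by
  simpa [param_x, hi] using P_le_ker_param h

lemma x_mem_P_iff [Nontrivial k] {i : V} : x k i ∈ P k G S ↔ i ∈ S :=
  ⟨fun h => by_contra fun hi => x_notMem_P hi h, x_mem_P⟩

lemma δ_notMem_P [Nontrivial k] {i j : V} (hi : i ∉ S) (hj : j ∉ S) (hij : ¬ Linked G S i j) :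
    δ k i j ∉ P k G S := fun h => by
  have hc : component G S j ≠ component G S i := fun hc =>
    hij (linked_of_component_eq hj hc.symm)
  have hexp : paramExp G S (.inl i) + paramExp G S (.inr j) ≠
      paramExp G S (.inl j) + paramExp G S (.inr i) := fun he => by
    simpa [paramExp, Finsupp.single_apply, hc] using
      DFunLike.congr_fun he (.inr (.inl (component G S i)))
  have := P_le_ker_param (k := k) h
  rw [RingHom.mem_ker, param_δ hi hj, sub_eq_zero, monomial_left_inj one_ne_zero] at this
  exact hexp this

end Parametrization

section Primality

variable (G S) in
def IsStandard (r : V → ℕ) (m : V ⊕ V →₀ ℕ) : Prop :=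
  (∀ i ∈ S, m (.inl i) = 0 ∧ m (.inr i) = 0) ∧
    ∀ i j, r i < r j → Linked G S i j → m (.inl j) = 0 ∨ m (.inr i) = 0

variable (G S) in
def paramExpTotal (m : V ⊕ V →₀ ℕ) : V ⊕ (Set V ⊕ Set V) →₀ ℕ :=
  Finsupp.linearCombination ℕ (paramExp G S) m

lemma param_monomial {m : V ⊕ V →₀ ℕ} (hm : ∀ i ∈ S, m (.inl i) = 0 ∧ m (.inr i) = 0) :
    param k G S (monomial m 1) = monomial (paramExpTotal G S m) 1 := by
  have hvar : ∀ w ∈ m.support, param k G S (X w) = monomial (paramExp G S w) 1 := by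
    rintro (i | i) hw
    · have hi : i ∉ S := fun hi => Finsupp.mem_support_iff.1 hw (hm i hi).1
      exact (param_x i).trans (if_neg hi)
    · have hi : i ∉ S := fun hi => Finsupp.mem_support_iff.1 hw (hm i hi).2
      exact (param_y i).trans (if_neg hi)
  rw [monomial_eq, C_1, one_mul, map_finsuppProd, paramExpTotal,
    Finsupp.linearCombination_apply, monomial_finsupp_sum_index, C_1, one_mul]
  refine Finset.prod_congr rfl fun w hw => ?_
  simp only [map_pow, hvar w hw, monomial_pow, one_pow]

section Fintype

variable [Fintype V]

lemma paramExpTotal_inl (m : V ⊕ V →₀ ℕ) (i : V) :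
    paramExpTotal G S m (.inl i) = m (.inl i) + m (.inr i) := by
  simp [paramExpTotal, Finsupp.linearCombination_apply, Finsupp.sum_fintype, Fintype.sum_sum_type,
    paramExp, Finsupp.single_apply]

lemma paramExpTotal_inr_inl (m : V ⊕ V →₀ ℕ) (c : Set V) :
    paramExpTotal G S m (.inr (.inl c)) =
      ∑ l ∈ Finset.univ.filter (component G S · = c), m (.inl l) := by
  simp [paramExpTotal, Finsupp.linearCombination_apply, Finsupp.sum_fintype, Fintype.sum_sum_type,
    paramExp, Finsupp.single_apply, Finset.sum_filter]

lemma IsStandard.inl_le {r : V → ℕ} (hr : Function.Injective r) {m m' : V ⊕ V →₀ ℕ}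
    (hm : IsStandard G S r m) (hm' : IsStandard G S r m')
    (h : paramExpTotal G S m = paramExpTotal G S m') (i : V) : m (.inl i) ≤ m' (.inl i) := by
  -- If `m' x_i < m x_i`, equal `u`-degrees give `j ~ i` with `m x_j < m' x_j`; then
  -- `x_i y_j ∣ m` and `x_j y_i ∣ m'`, which standardness forbids unless `i = j`.
  by_contra! hlt
  have hi : i ∉ S := fun hi => by simp [(hm.1 i hi).1] at hlt
  have hsum := congrArg (· (.inr (.inl (component G S i)))) h
  simp only [paramExpTotal_inr_inl] at hsum
  obtain ⟨j, hjc, hj⟩ : ∃ j ∈ Finset.univ.filter (component G S · = component G S i),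
      m (.inl j) < m' (.inl j) := by
    by_contra! hge
    exact (Finset.sum_lt_sum hge ⟨i, by simp, hlt⟩).ne' hsum
  have hjS : j ∉ S := fun hjS => by simp [(hm'.1 j hjS).1] at hj
  have hij : Linked G S i j := linked_of_component_eq hjS (Finset.mem_filter.1 hjc).2.symm
  have ht_i := congrArg (· (.inl i)) h
  have ht_j := congrArg (· (.inl j)) h
  simp only [paramExpTotal_inl] at ht_i ht_j
  rcases lt_trichotomy (r i) (r j) with hrij | hrij | hrij
  · rcases hm'.2 i j hrij hij with h0 | h0 <;> omega
  · obtain rfl := hr hrij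
    omega
  · rcases hm.2 j i hrij hij.symm with h0 | h0 <;> omega

lemma IsStandard.eq {r : V → ℕ} (hr : Function.Injective r) {m m' : V ⊕ V →₀ ℕ}
    (hm : IsStandard G S r m) (hm' : IsStandard G S r m')
    (h : paramExpTotal G S m = paramExpTotal G S m') : m = m' := by
  have hx : ∀ i, m (.inl i) = m' (.inl i) := fun i =>
    le_antisymm (hm.inl_le hr hm' h i) (hm'.inl_le hr hm h.symm i)
  ext (i | i)
  · exact hx i
  · have := congrArg (· (.inl i)) h
    simp only [paramExpTotal_inl, hx i] at this
    omega

lemma monomial_mem_sup_standard (r : V → ℕ) (m : V ⊕ V →₀ ℕ) :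
    monomial m (1 : k) ∈
      (P k G S).restrictScalars k ⊔ restrictSupport k {m | IsStandard G S r m} := by
  induction hw : ∑ i, m (.inl i) * r i using Nat.strong_induction_on generalizing m with
  | _ w ih =>
  have hP : ∀ f ∈ P k G S,
      f ∈ (P k G S).restrictScalars k ⊔ restrictSupport k {m | IsStandard G S r m} :=
    fun f hf => Submodule.mem_sup_left ((Submodule.restrictScalars_mem k _ f).2 hf)
  by_cases hS : ∃ i ∈ S, m (.inl i) ≠ 0 ∨ m (.inr i) ≠ 0
  · obtain ⟨i, hi, hm | hm⟩ := hS
    · obtain ⟨m₀, rfl⟩ := Finsupp.exists_eq_add_single hm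
      rw [monomial_add_single, pow_one]
      exact hP _ (Ideal.mul_mem_left _ _ (x_mem_P hi))
    · obtain ⟨m₀, rfl⟩ := Finsupp.exists_eq_add_single hm
      rw [monomial_add_single, pow_one]
      exact hP _ (Ideal.mul_mem_left _ _ (y_mem_P hi))
  push Not at hS
  by_cases hstd : IsStandard G S r m
  · exact Submodule.mem_sup_right ((monomial_mem_restrictSupport k).2 (.inl hstd))
  obtain ⟨i, j, hrij, hij, hj, hi⟩ : ∃ i j, r i < r j ∧ Linked G S i j ∧
      m (.inl j) ≠ 0 ∧ m (.inr i) ≠ 0 := by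
    by_contra! h
    exact hstd ⟨hS, fun i j hrij hij => or_iff_not_imp_left.2 (h i j hrij hij)⟩
  obtain ⟨m₁, rfl⟩ := Finsupp.exists_eq_add_single hj
  obtain ⟨m₀, rfl⟩ : ∃ m₀, m₁ = m₀ + .single (.inr i) 1 :=
    Finsupp.exists_eq_add_single (by simpa [Finsupp.single_apply] using hi)
  -- rewrite `x_j y_i` as `x_i y_j - δ_ij`, which lowers the weight
  have hrewrite : monomial (m₀ + .single (.inr i) 1 + .single (.inl j) 1) (1 : k) =
      monomial (m₀ + .single (.inl i) 1 + .single (.inr j) 1) 1 - monomial m₀ 1 * δ k i j := by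
    simp only [monomial_add_single, pow_one, δ, x, y]
    ring
  rw [hrewrite]
  refine Submodule.sub_mem _ (ih _ ?_ _ rfl)
    (hP _ (Ideal.mul_mem_left _ _ (δ_mem_P (fun h => hrij.ne (h ▸ rfl)) hij)))
  subst hw
  simp [Finsupp.single_apply, add_mul, Finset.sum_add_distrib, hrij]

end Fintype

theorem ker_param [Finite V] : RingHom.ker (param k G S) = P k G S := by
  have := Fintype.ofFinite V
  obtain ⟨r, hr⟩ := exists_injective_nat V
  exact ker_eq_of_injOn_monomials P_le_ker_param (fun m hm => param_monomial hm.1)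
    (fun m hm m' hm' h => IsStandard.eq hr hm hm' h) (monomial_mem_sup_standard r)

theorem P_isPrime [IsDomain k] [Finite V] : (P k G S).IsPrime :=
  ker_param (k := k) (G := G) (S := S) ▸ RingHom.ker_isPrime _

end Primality

section KillVertex

variable (k) in
def killVertex (v : V) : MvPolynomial (V ⊕ V) k →ₐ[k] MvPolynomial (V ⊕ V) k :=
  aeval <| Sum.elim (fun i => if i = v then 0 else x k i) (fun i => if i = v then 0 else y k i)

variable {v : V}

lemma killVertex_x (i : V) : killVertex k v (x k i) = if i = v then 0 else x k i :=
  aeval_X _ _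

lemma killVertex_y (i : V) : killVertex k v (y k i) = if i = v then 0 else y k i :=
  aeval_X _ _

lemma killVertex_δ {i j : V} (hi : i ≠ v) (hj : j ≠ v) : killVertex k v (δ k i j) = δ k i j := by
  simp only [δ, map_sub, map_mul, killVertex_x, killVertex_y, if_neg hi, if_neg hj]

lemma span_le_ker_killVertex : Ideal.span {x k v, y k v} ≤ RingHom.ker (killVertex k v) := by
  simp [Ideal.span_le, Set.insert_subset_iff, killVertex_x, killVertex_y]

lemma sub_killVertex_mem (f : MvPolynomial (V ⊕ V) k) :
    f - killVertex k v f ∈ Ideal.span {x k v, y k v} := by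
  induction f using MvPolynomial.induction_on with
  | C a => simp
  | add p q hp hq => simpa only [map_add, add_sub_add_comm] using add_mem hp hq
  | mul_X p w hp =>
    have hw : X w - killVertex k v (X w) ∈ Ideal.span {x k v, y k v} := by
      rcases w with i | i
      · rw [← x, killVertex_x]
        split_ifs with h
        · exact h ▸ Ideal.subset_span (by simp)
        · simp
      · rw [← y, killVertex_y]
        split_ifs with h
        · exact h ▸ Ideal.subset_span (by simp)
        · simp
    rw [map_mul, show p * X w - killVertex k v p * killVertex k v (X w) =
      (p - killVertex k v p) * X w + killVertex k v p * (X w - killVertex k v (X w)) by ring]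
    exact add_mem (Ideal.mul_mem_right _ _ hp) (Ideal.mul_mem_left _ _ hw)

lemma J_le_comap_killVertex :
    J k G ≤ (J k (G.deleteIncidenceSet v)).comap (killVertex k v) := by
  refine J_le_iff.2 fun i j hij => ?_
  rw [Ideal.mem_comap]
  by_cases hi : i = v
  · simp [δ, killVertex_x, killVertex_y, hi]
  by_cases hj : j = v
  · simp [δ, killVertex_x, killVertex_y, hj]
  rw [killVertex_δ hi hj]
  exact δ_mem_J (deleteIncidenceSet_adj.2 ⟨hij, hi, hj⟩)

lemma P_insert_le_comap_killVertex (T : Set V) :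
    P k G (insert v T) ≤ (P k (G.deleteIncidenceSet v) T).comap (killVertex k v) := by
  refine P_le_iff.2 ⟨fun i hi => ?_, fun i j hne hij => ?_⟩ <;> simp only [Ideal.mem_comap]
  · rcases hi with rfl | hi
    · simp [killVertex_x, killVertex_y]
    by_cases hiv : i = v
    · simp [killVertex_x, killVertex_y, hiv]
    · simp only [killVertex_x, killVertex_y, if_neg hiv]
      exact ⟨x_mem_P hi, y_mem_P hi⟩
  · have hi := hij.notMem_left
    have hj := hij.notMem_right
    rw [Set.mem_insert_iff, not_or] at hi hj
    rw [killVertex_δ hi.1 hj.1]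
    refine δ_mem_P hne (hij.mono (Set.subset_insert v T) fun a b ha hb hab => ?_)
    rw [Set.mem_insert_iff, not_or] at ha hb
    exact deleteIncidenceSet_adj.2 ⟨hab, ha.1, hb.1⟩

end KillVertex

section Neighborhood

variable (v : V)

variable (k G) in
def neighborIdeal : Ideal (MvPolynomial (V ⊕ V) k) :=
  Ideal.span {f | ∃ a b, G.Adj v a ∧ G.Adj v b ∧ f = δ k a b}

variable (G) in
def completeNeighbors : SimpleGraph V :=
  G ⊔ SimpleGraph.fromRel fun a b => G.Adj v a ∧ G.Adj v b

lemma J_completeNeighbors_le : J k (completeNeighbors G v) ≤ J k G ⊔ neighborIdeal k G v := by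
  refine J_le_iff.2 fun i j hij => ?_
  rcases hij with hij | ⟨-, hij | hji⟩
  · exact Ideal.mem_sup_left (δ_mem_J hij)
  · exact Ideal.mem_sup_right (Ideal.subset_span ⟨i, j, hij.1, hij.2, rfl⟩)
  · exact Ideal.mem_sup_right (Ideal.subset_span ⟨i, j, hji.2, hji.1, rfl⟩)

lemma span_mul_neighborIdeal_le : Ideal.span {x k v, y k v} * neighborIdeal k G v ≤ J k G := by
  rw [neighborIdeal, Ideal.span_mul_span', Ideal.span_le]
  rintro _ ⟨z, hz, _, ⟨a, b, ha, hb, rfl⟩, rfl⟩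
  have hvb := δ_mem_J (k := k) hb
  have hav := δ_mem_J (k := k) ha.symm
  dsimp only
  rcases hz with rfl | rfl
  · rw [show x k v * δ k a b = x k a * δ k v b + x k b * δ k a v by simp only [δ]; ring]
    exact add_mem (Ideal.mul_mem_left _ _ hvb) (Ideal.mul_mem_left _ _ hav)
  · rw [show y k v * δ k a b = y k a * δ k v b + y k b * δ k a v by simp only [δ]; ring]
    exact add_mem (Ideal.mul_mem_left _ _ hvb) (Ideal.mul_mem_left _ _ hav)

lemma J_completeNeighbors_inf_le :
    J k (completeNeighbors G v) ⊓ (Ideal.span {x k v, y k v} ⊔ J k G) ≤ J k G := by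
  rintro f ⟨hf, hf'⟩
  obtain ⟨g, hg, d, hd, rfl⟩ := Submodule.mem_sup.1 (J_completeNeighbors_le v hf)
  refine add_mem hg ?_
  have hd' : d ∈ Ideal.span {x k v, y k v} ⊔ J k G := by
    simpa using sub_mem hf' (Ideal.mem_sup_right hg)
  have hkill : killVertex k v d ∈ J k G := by
    have hle : Ideal.span {x k v, y k v} ⊔ J k G ≤ (J k G).comap (killVertex k v) :=
      sup_le ((span_le_ker_killVertex (v := v)).trans (Ideal.comap_mono bot_le))
        (J_le_comap_killVertex.trans (Ideal.comap_mono (J_mono (G.deleteIncidenceSet_le v))))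
    exact hle hd'
  have hsub : d - killVertex k v d ∈ J k G := by
    refine span_mul_neighborIdeal_le v (Ideal.sub_mem_mul_span_of_fixed _ sub_killVertex_mem ?_ hd)
    rintro _ ⟨a, b, ha, hb, rfl⟩
    exact killVertex_δ ha.ne' hb.ne'
  simpa using add_mem hsub hkill

end Neighborhood

section Intersection

lemma adj_of_reachable (hG : ∀ v a b, G.Adj v a → G.Adj v b → a ≠ b → G.Adj a b) {a b : V}
    (h : G.Reachable a b) (hne : a ≠ b) : G.Adj a b := by
  obtain ⟨p⟩ := h
  induction p with
  | nil => exact absurd rfl hne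
  | @cons a c b hac p ih =>
    by_cases hcb : c = b
    · exact hcb ▸ hac
    · exact hG c a b hac.symm (ih hcb) hne

lemma P_empty_le_J (hG : ∀ v a b, G.Adj v a → G.Adj v b → a ≠ b → G.Adj a b) :
    P k G ∅ ≤ J k G := by
  refine P_le_iff.2 ⟨fun i hi => absurd hi (Set.notMem_empty i), fun i j hne hij => ?_⟩
  obtain ⟨_, _, hr⟩ := hij
  exact δ_mem_J (adj_of_reachable hG (hr.map (Embedding.induce _).toHom) hne)

variable (G) in
/-- The induction measure: it drops when a neighbourhood is completed, and when a vertex `v` is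
isolated, since the diagonal pair `(v, v)` is counted. -/
def nonEdgesOnSupport : Set (V × V) :=
  {p | p.1 ∈ G.support ∧ p.2 ∈ G.support ∧ ¬ G.Adj p.1 p.2}

lemma nonEdgesOnSupport_completeNeighbors_ssubset {v a b : V} (ha : G.Adj v a) (hb : G.Adj v b)
    (hab : a ≠ b) (hnab : ¬ G.Adj a b) :
    nonEdgesOnSupport (completeNeighbors G v) ⊂ nonEdgesOnSupport G := by
  have hsupp : (completeNeighbors G v).support = G.support := by
    refine le_antisymm (fun c hc => ?_) (support_mono le_sup_left)
    obtain ⟨d, hcd | ⟨-, hcd | hcd⟩⟩ := (mem_support _).1 hc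
    exacts [(mem_support _).2 ⟨d, hcd⟩, (mem_support _).2 ⟨v, hcd.1.symm⟩,
      (mem_support _).2 ⟨v, hcd.2.symm⟩]
  refine ⟨fun p ⟨h₁, h₂, hp⟩ => ⟨hsupp ▸ h₁, hsupp ▸ h₂, fun h => hp (Or.inl h)⟩, fun h => ?_⟩
  have := (h (show (a, b) ∈ nonEdgesOnSupport G from
    ⟨(mem_support _).2 ⟨v, ha.symm⟩, (mem_support _).2 ⟨v, hb.symm⟩, hnab⟩)).2.2
  exact this (Or.inr ⟨hab, Or.inl ⟨ha, hb⟩⟩)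

lemma nonEdgesOnSupport_deleteIncidenceSet_ssubset {v : V} (hv : v ∈ G.support) :
    nonEdgesOnSupport (G.deleteIncidenceSet v) ⊂ nonEdgesOnSupport G := by
  have hsupp : ∀ {c}, c ∈ (G.deleteIncidenceSet v).support → c ∈ G.support ∧ c ≠ v :=
    fun hc => let ⟨d, hcd⟩ := (mem_support _).1 hc
      ⟨(mem_support _).2 ⟨d, (deleteIncidenceSet_adj.1 hcd).1⟩,
        (deleteIncidenceSet_adj.1 hcd).2.1⟩
  refine ⟨fun p ⟨h₁, h₂, hp⟩ => ⟨(hsupp h₁).1, (hsupp h₂).1, fun h => hp ?_⟩, fun h => ?_⟩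
  · exact deleteIncidenceSet_adj.2 ⟨h, (hsupp h₁).2, (hsupp h₂).2⟩
  · exact (hsupp (h (show (v, v) ∈ nonEdgesOnSupport G from
      ⟨hv, hv, G.loopless.irrefl v⟩)).1).2 rfl

variable (k) in
theorem iInf_P_le_J [Finite V] (G : SimpleGraph V) : ⨅ S, P k G S ≤ J k G := by
  induction hn : (nonEdgesOnSupport G).ncard using Nat.strong_induction_on generalizing G with
  | _ n ih =>
  by_cases hG : ∀ v a b, G.Adj v a → G.Adj v b → a ≠ b → G.Adj a b
  · exact (iInf_le _ ∅).trans (P_empty_le_J hG)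
  push Not at hG
  obtain ⟨v, a, b, ha, hb, hab, hnab⟩ := hG
  intro f hf
  have hfP : ∀ S, f ∈ P k G S := Ideal.mem_iInf.1 hf
  have hf₁ : f ∈ J k (completeNeighbors G v) :=
    ih _ (hn ▸ Set.ncard_lt_ncard (nonEdgesOnSupport_completeNeighbors_ssubset ha hb hab hnab))
      _ rfl (Ideal.mem_iInf.2 fun S => P_mono le_sup_left S (hfP S))
  have hf₂ : killVertex k v f ∈ J k (G.deleteIncidenceSet v) :=
    ih _ (hn ▸ Set.ncard_lt_ncard
      (nonEdgesOnSupport_deleteIncidenceSet_ssubset ((mem_support _).2 ⟨a, ha⟩)))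
      _ rfl (Ideal.mem_iInf.2 fun T => P_insert_le_comap_killVertex T (hfP _))
  have hf₃ : f ∈ Ideal.span {x k v, y k v} ⊔ J k G := by
    rw [← sub_add_cancel f (killVertex k v f)]
    exact add_mem (Ideal.mem_sup_left (sub_killVertex_mem f))
      (Ideal.mem_sup_right (J_mono (G.deleteIncidenceSet_le v) hf₂))
  exact J_completeNeighbors_inf_le v ⟨hf₁, hf₃⟩

end Intersection

section CutSets

lemma linked_iff_exists_walk {i j : V} :
    Linked G S i j ↔ ∃ p : G.Walk i j, ∀ u ∈ p.support, u ∉ S := by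
  refine ⟨fun ⟨_, _, ⟨q⟩⟩ => ⟨q.map (Embedding.induce _).toHom, fun u hu => ?_⟩,
    fun ⟨p, hp⟩ => ⟨_, _, ⟨p.induce Sᶜ hp⟩⟩⟩
  obtain ⟨u', -, rfl⟩ := List.mem_map.1 ((q.support_map _) ▸ hu)
  exact u'.2

lemma Linked.of_diff_singleton {w i j : V} (h : Linked G (S \ {w}) i j) :
    Linked G S i j ∨ Linked G (S \ {w}) i w := by
  obtain ⟨p, hp⟩ := linked_iff_exists_walk.1 h
  by_cases hw : w ∈ p.support
  · exact .inr (linked_iff_exists_walk.2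
      ⟨p.takeUntil w hw, fun u hu => hp u (p.support_takeUntil_subset_support hw hu)⟩)
  · refine .inl (linked_iff_exists_walk.2 ⟨p, fun u hu huS => hp u hu ⟨huS, ?_⟩⟩)
    rintro rfl
    exact hw hu

variable (G) in
def IsCutSet (S : Set V) : Prop :=
  ∀ w ∈ S, Nat.card (G.induce (S \ {w})ᶜ).ConnectedComponent <
    Nat.card (G.induce Sᶜ).ConnectedComponent

variable [Finite V]

lemma card_connectedComponent_lt_of_linked {w i j : V} (hi : i ∉ S) (hj : j ∉ S)
    (hij : ¬ Linked G S i j) (h : Linked G (S \ {w}) i j) :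
    Nat.card (G.induce (S \ {w})ᶜ).ConnectedComponent <
      Nat.card (G.induce Sᶜ).ConnectedComponent := by
  have hsub : Sᶜ ⊆ (S \ {w})ᶜ := fun u hu huS => hu huS.1
  set M := ConnectedComponent.map (G.induceHomOfLE hsub).toHom
  have hM : ∀ u (hu : u ∉ S), M (connectedComponentMk _ ⟨u, hu⟩) =
      connectedComponentMk _ ⟨u, hsub hu⟩ := fun _ _ => rfl
  have hiw : Linked G (S \ {w}) i w := h.of_diff_singleton.resolve_left hij
  have hsurj : Function.Surjective M := by
    refine ConnectedComponent.ind fun ⟨u, hu⟩ => ?_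
    by_cases huw : u = w
    · subst huw
      obtain ⟨_, _, hr⟩ := hiw
      exact ⟨_, (hM i hi).trans (ConnectedComponent.sound hr)⟩
    · exact ⟨_, hM u fun huS => hu ⟨huS, huw⟩⟩
  by_contra! hle
  have hinj := (hsurj.bijective_of_nat_card_le hle).injective
  obtain ⟨_, _, hr⟩ := h
  refine hij ⟨hi, hj, ConnectedComponent.exact (hinj ?_)⟩
  rw [hM, hM]
  exact ConnectedComponent.sound hr

lemma exists_linked_of_card_connectedComponent_lt {w : V}
    (h : Nat.card (G.induce (S \ {w})ᶜ).ConnectedComponent <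
      Nat.card (G.induce Sᶜ).ConnectedComponent) :
    ∃ i j, i ∉ S ∧ j ∉ S ∧ ¬ Linked G S i j ∧ Linked G (S \ {w}) i j := by
  have hsub : Sᶜ ⊆ (S \ {w})ᶜ := fun u hu huS => hu huS.1
  obtain ⟨c, c', hcc', hne⟩ := (Function.not_injective_iff
    (f := ConnectedComponent.map (G.induceHomOfLE hsub).toHom)).1 fun hinj =>
    (Nat.card_le_card_of_injective _ hinj).not_gt h
  induction c using ConnectedComponent.ind with | _ u =>
  induction c' using ConnectedComponent.ind with | _ u' =>
  exact ⟨u, u', u.2, u'.2, fun ⟨_, _, hr⟩ => hne (ConnectedComponent.sound hr),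
    ⟨hsub u.2, hsub u'.2, ConnectedComponent.exact hcc'⟩⟩

lemma P_diff_singleton_le {w : V} (hw : w ∈ S)
    (hcard : Nat.card (G.induce Sᶜ).ConnectedComponent ≤
      Nat.card (G.induce (S \ {w})ᶜ).ConnectedComponent) :
    P k G (S \ {w}) ≤ P k G S := by
  refine P_le_iff.2 ⟨fun i hi => ⟨x_mem_P hi.1, y_mem_P hi.1⟩, fun i j hne hij => ?_⟩
  by_cases hiw : i = w
  · exact hiw ▸ δ_mem_P_of_left_mem hw
  by_cases hjw : j = w
  · exact hjw ▸ δ_mem_P_of_right_mem hw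
  have hi : i ∉ S := fun hiS => hij.notMem_left ⟨hiS, hiw⟩
  have hj : j ∉ S := fun hjS => hij.notMem_right ⟨hjS, hjw⟩
  by_cases hijS : Linked G S i j
  · exact δ_mem_P hne hijS
  · exact absurd hcard (card_connectedComponent_lt_of_linked hi hj hijS hij).not_ge

lemma exists_isCutSet_P_le (S : Set V) : ∃ T, IsCutSet G T ∧ P k G T ≤ P k G S := by
  induction hn : S.ncard using Nat.strong_induction_on generalizing S with
  | _ n ih =>
  by_cases hS : IsCutSet G S
  · exact ⟨S, hS, le_rfl⟩
  obtain ⟨w, hw, hcard⟩ : ∃ w ∈ S, _ := by simpa [IsCutSet] using hS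
  obtain ⟨T, hT, hle⟩ := ih _ (hn ▸ Set.ncard_sdiff_singleton_lt_of_mem hw) (S \ {w}) rfl
  exact ⟨T, hT, hle.trans (P_diff_singleton_le hw hcard)⟩

lemma P_not_le_of_isCutSet [Nontrivial k] {T : Set V} (hS : IsCutSet G S) (hTS : T ≠ S) :
    ¬ P k G T ≤ P k G S := by
  intro hle
  have hsub : T ⊆ S := fun i hi => x_mem_P_iff.1 (hle (x_mem_P hi))
  obtain ⟨w, hwS, hwT⟩ := Set.exists_of_ssubset (hsub.ssubset_of_ne hTS)
  obtain ⟨i, j, hi, hj, hijS, hij⟩ := exists_linked_of_card_connectedComponent_lt (hS w hwS)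
  have hne : i ≠ j := fun h => hijS (h ▸ linked_refl hi)
  refine δ_notMem_P hi hj hijS (hle (δ_mem_P hne (hij.mono ?_ fun _ _ _ _ hab => hab)))
  exact fun u hu => ⟨hsub hu, fun huw => hwT (huw ▸ hu)⟩

end CutSets

section Decomposition

lemma P_injective [Nontrivial k] : Function.Injective (P k G) := fun S T h =>
  Set.ext fun _ => by rw [← x_mem_P_iff (k := k) (G := G), h, x_mem_P_iff]

variable [Finite V]

theorem J_eq_iInf_P : J k G = ⨅ (S) (_ : IsCutSet G S), P k G S := by
  refine le_antisymm (le_iInf₂ fun S _ => J_le_P G S) (le_trans ?_ (iInf_P_le_J k G))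
  refine le_iInf fun S => ?_
  obtain ⟨T, hT, hle⟩ := exists_isCutSet_P_le (k := k) (G := G) S
  exact (iInf₂_le T hT).trans hle

theorem J_ne_iInf_P_diff [IsDomain k] (hS : IsCutSet G S) :
    J k G ≠ ⨅ T ∈ {T | IsCutSet G T} \ {S}, P k G T := fun h => by
  obtain ⟨T, ⟨-, hTS⟩, hle⟩ := P_isPrime.exists_le_of_biInf_le (Set.toFinite _) (h ▸ J_le_P G S)
  exact P_not_le_of_isCutSet hS hTS hle

theorem isRadical_J [IsDomain k] : (J k G).IsRadical := by
  rw [J_eq_iInf_P]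
  exact Ideal.isRadical_iInf _ fun S => Ideal.isRadical_iInf _ fun _ => P_isPrime.isRadical

end Decomposition

end BinomialEdgeIdeal

end

/-- `J(G) = ⋂_{S ∈ C(G)} P_S(G)` is the minimal primary decomposition of
the binomial edge ideal: each `P_S(G)` is prime, they are pairwise distinct, the
decomposition is irredundant, and in particular `J(G)` is radical. -/
theorem JG_primary_decomposition (k : Type) [Field k] (n : ℕ) (G : SimpleGraph (Fin n)) :
    (JG k n G = ⨅ S ∈ cutSets G, PS k n G S) ∧
    (∀ S ∈ cutSets G, (PS k n G S).IsPrime) ∧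
    (∀ S ∈ cutSets G, ∀ T ∈ cutSets G, S ≠ T → PS k n G S ≠ PS k n G T) ∧
    (∀ S ∈ cutSets G, JG k n G ≠ ⨅ T ∈ cutSets G \ {S}, PS k n G T) ∧
    (JG k n G).IsRadical := by
  have hC : cutSets G = {S | BinomialEdgeIdeal.IsCutSet G S} :=
    Set.ext fun S => ⟨by rintro (rfl | hS); exacts [fun w hw => absurd hw (Set.notMem_empty w), hS],
      .inr⟩
  have hJ : JG k n G = BinomialEdgeIdeal.J k G := rfl
  have hP : PS k n G = BinomialEdgeIdeal.P k G := rfl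
  rw [hC, hJ, hP]
  exact ⟨BinomialEdgeIdeal.J_eq_iInf_P, fun _ _ => BinomialEdgeIdeal.P_isPrime,
    fun _ _ _ _ hST h => hST (BinomialEdgeIdeal.P_injective h),
    fun _ hS => BinomialEdgeIdeal.J_ne_iInf_P_diff hS, BinomialEdgeIdeal.isRadical_J⟩
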